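/- arXiv:1708.09830 — 3 statements merged into one kernel-verified Lean document; each statement's English description precedes it below -/
import Mathlib

section
/- The pushforward of two-dimensional Lebesgue measure on the set ℝ × ([0, π) \ {π/2}) under the map (r, θ) ↦ r / cos θ equals 2 times one-dimensional Lebesgue measure on ℝ. -/
/-! By Tonelli, slice at fixed `θ`: when `cos θ ≠ 0`, the preimage of `A` under `r ↦ r / cos θ`
is `A` dilated by `cos θ`, of measure `|cos θ| · vol A`. Integrating over `θ` then gives
`(∫_0^π |cos θ| dθ) · vol A = 2 · vol A`. -/

open MeasureTheory Set
open scoped ENNReal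

noncomputable section

section

open Real

theorem integral_abs_cos_zero_pi : ∫ θ in (0)..π, |cos θ| = 2 := by
  have hcont : Continuous fun θ => |cos θ| := continuous_cos.abs
  have hleft : ∫ θ in (0)..(π / 2), |cos θ| = 1 := by
    rw [intervalIntegral.integral_congr (g := cos) fun θ hθ => ?_]
    · simp [integral_cos]
    rw [uIcc_of_le (by positivity)] at hθ
    exact abs_of_nonneg (cos_nonneg_of_mem_Icc ⟨by linarith [hθ.1, pi_pos], hθ.2⟩)
  have hright : ∫ θ in (π / 2)..π, |cos θ| = 1 := by
    rw [intervalIntegral.integral_congr (g := fun θ => -cos θ) fun θ hθ => ?_]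
    · simp [integral_cos]
    rw [uIcc_of_le (by linarith [pi_pos])] at hθ
    exact abs_of_nonpos (cos_nonpos_of_pi_div_two_le_of_le hθ.1 (by linarith [hθ.2, pi_pos]))
  rw [← intervalIntegral.integral_add_adjacent_intervals (b := π / 2)
    (hcont.intervalIntegrable _ _) (hcont.intervalIntegrable _ _), hleft, hright]
  norm_num

theorem lintegral_ofReal_abs_cos_Ico_zero_pi :
    ∫⁻ θ in Ico 0 π, ENNReal.ofReal |cos θ| = 2 := by
  rw [setLIntegral_congr Ico_ae_eq_Ioc, ← ofReal_integral_eq_lintegral_ofReal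
    (continuous_cos.abs.integrableOn_Ioc) (.of_forall fun θ => abs_nonneg _),
    ← intervalIntegral.integral_of_le pi_pos.le, integral_abs_cos_zero_pi, ENNReal.ofReal_ofNat]

theorem cos_ne_zero_of_mem_Ico_of_ne {θ : ℝ} (hθ : θ ∈ Ico 0 π) (hθ' : θ ≠ π / 2) :
    cos θ ≠ 0 := fun h =>
  hθ' <| injOn_cos ⟨hθ.1, hθ.2.le⟩ ⟨by positivity, by linarith [pi_pos]⟩ (by rw [h, cos_pi_div_two])

end

theorem map_div_prod_volume {β : Type*} [MeasurableSpace β] (ν : Measure β) [SFinite ν]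
    {g : β → ℝ} (hg : Measurable g) (hg0 : ∀ᵐ θ ∂ν, g θ ≠ 0) :
    Measure.map (fun q : ℝ × β => q.1 / g q.2) ((volume : Measure ℝ).prod ν)
      = (∫⁻ θ, ENNReal.ofReal |g θ| ∂ν) • volume := by
  have hf : Measurable fun q : ℝ × β => q.1 / g q.2 := measurable_fst.div (hg.comp measurable_snd)
  ext A hA
  rw [Measure.map_apply hf hA, Measure.prod_apply_symm (hf hA), Measure.smul_apply, smul_eq_mul,
    ← lintegral_mul_const _ hg.abs.ennreal_ofReal]
  refine lintegral_congr_ae (hg0.mono fun θ hθ => ?_)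
  have hslice : (fun r => (r, θ)) ⁻¹' ((fun q : ℝ × β => q.1 / g q.2) ⁻¹' A)
      = (· * (g θ)⁻¹) ⁻¹' A := rfl
  simp only [hslice, Real.volume_preimage_mul_right (inv_ne_zero hθ), inv_inv]

/-- The pushforward of two-dimensional Lebesgue measure on `ℝ × ([0, π) \ {π/2})` under
the map `(r, θ) ↦ r / cos θ` equals twice one-dimensional Lebesgue measure on `ℝ`. -/
theorem map_lineParam_xAxis :
    Measure.map (fun q : ℝ × ℝ => q.1 / Real.cos q.2)
        (volume.restrict (Set.univ ×ˢ (Set.Ico 0 Real.pi \ {Real.pi / 2})))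
      = (2 : ℝ≥0∞) • (volume : Measure ℝ) := by
  set s : Set ℝ := Ico 0 Real.pi \ {Real.pi / 2}
  have hs : MeasurableSet s := measurableSet_Ico.diff (measurableSet_singleton _)
  have hcos : ∀ᵐ θ ∂volume.restrict s, Real.cos θ ≠ 0 :=
    ae_restrict_of_forall_mem hs fun θ hθ => cos_ne_zero_of_mem_Ico_of_ne hθ.1 hθ.2
  have hs_ae : s =ᵐ[volume] Ico 0 Real.pi := sdiff_null_ae_eq_self (measure_singleton _)
  rw [Measure.volume_eq_prod, ← Measure.prod_restrict, Measure.restrict_univ,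
    map_div_prod_volume _ Real.measurable_cos hcos, setLIntegral_congr hs_ae,
    lintegral_ofReal_abs_cos_Ico_zero_pi]
end
end

section
/- Let {(R_n, Θ_n)}_{n ∈ ℕ} be a Poisson line process of intensity λ > 0. Then the point process of intersections of the associated lines with the x-axis is a Poisson point process of intensity 2λ/π on ℝ: for every Borel set B ⊆ ℝ of finite Lebesgue measure, the count #{n : Θ_n ≠ π/2 and R_n / cos Θ_n ∈ B} has the Poisson distribution with mean (2λ/π)·Leb(B), and for pairwise disjoint Borel sets B₁, …, B_k ⊆ ℝ these counts are mutually independent. -/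
open MeasureTheory Set
open scoped ENNReal

noncomputable section

/-- The strip `ℝ × [0, π)` of line parameters. -/
def strip : Set (ℝ × ℝ) := Set.univ ×ˢ Set.Ico 0 Real.pi

/-- The number (in `ℝ≥0∞`) of indices `n` such that `(R n ω, Θ n ω) ∈ A`. -/
def paramCount {Ω : Type*} (R Θ : ℕ → Ω → ℝ) (A : Set (ℝ × ℝ)) (ω : Ω) : ℝ≥0∞ :=
  ({n : ℕ | (R n ω, Θ n ω) ∈ A}.encard : ℝ≥0∞)

/-- The Poisson probability mass function with mean `m`, evaluated at `k`. -/
def poissonProb (m : ℝ) (k : ℕ) : ℝ :=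
  Real.exp (-m) * m ^ k / (Nat.factorial k)

/-- `(R, Θ)` is a Poisson line process of intensity `lam`. -/
def IsPoissonLineProcess {Ω : Type*} [MeasurableSpace Ω] (P : Measure Ω) (lam : ℝ)
    (R Θ : ℕ → Ω → ℝ) : Prop :=
  (∀ n, Measurable (R n)) ∧ (∀ n, Measurable (Θ n)) ∧
  (∀ n ω, Θ n ω ∈ Set.Ico 0 Real.pi) ∧
  (∀ A : Set (ℝ × ℝ), MeasurableSet A → A ⊆ strip → volume A < ⊤ → ∀ k : ℕ,
      P {ω | paramCount R Θ A ω = (k : ℝ≥0∞)} =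
        ENNReal.ofReal (poissonProb (lam / Real.pi * (volume A).toReal) k)) ∧
  (∀ (m : ℕ) (A : Fin m → Set (ℝ × ℝ)),
      (∀ i, MeasurableSet (A i)) → (∀ i, A i ⊆ strip) → (∀ i, volume (A i) < ⊤) →
      Pairwise (Function.onFun Disjoint A) →
      ProbabilityTheory.iIndepFun
        (fun i => paramCount R Θ (A i)) P)

/-- The number (in `ℝ≥0∞`) of lines of the process whose intersection point with the
`x`-axis lies in `B ⊆ ℝ`. -/
def xAxisCount {Ω : Type*} (R Θ : ℕ → Ω → ℝ) (B : Set ℝ) (ω : Ω) : ℝ≥0∞ :=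
  ({n : ℕ | Θ n ω ≠ Real.pi / 2 ∧ R n ω / Real.cos (Θ n ω) ∈ B}.encard : ℝ≥0∞)

/-!
The line `L_{r,θ}` with `θ ≠ π/2` meets the `x`-axis in `r / cos θ`, so the lines meeting the
`x`-axis in `B` are exactly those whose parameters lie in
`crossingParams B = {(r, θ) : θ ∈ [0, π) \ {π/2}, r / cos θ ∈ B}`, and the `x`-axis counts are
parameter counts of these sets. Since `B ↦ crossingParams B` preserves measurability and
disjointness, everything follows from the defining properties of the line process once we know
`Leb (crossingParams B) = 2 Leb(B)`: by Fubini, the slice at angle `θ` is `cos θ • B`, of measure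
`|cos θ| Leb(B)`, and `∫₀^π |cos θ| dθ = 2`.
-/

lemma integral_abs_cos_zero_pi_s5 : ∫ x in (0 : ℝ)..Real.pi, |Real.cos x| = 2 := by
  have h_first : ∫ x in (0 : ℝ)..Real.pi / 2, |Real.cos x| = 1 := by
    rw [intervalIntegral.integral_congr (g := Real.cos)]
    · simp [integral_cos]
    · intro x hx
      rw [uIcc_of_le (by positivity)] at hx
      exact abs_of_nonneg (Real.cos_nonneg_of_mem_Icc ⟨by linarith [hx.1, Real.pi_pos], hx.2⟩)
  have h_second : ∫ x in Real.pi / 2..Real.pi, |Real.cos x| = 1 := by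
    rw [intervalIntegral.integral_congr (g := fun x => -Real.cos x)]
    · simp [integral_cos]
    · intro x hx
      rw [uIcc_of_le (by linarith [Real.pi_pos])] at hx
      exact abs_of_nonpos
        (Real.cos_nonpos_of_pi_div_two_le_of_le hx.1 (by linarith [hx.2, Real.pi_pos]))
  have hint := Real.continuous_cos.abs.intervalIntegrable (μ := volume)
  rw [← intervalIntegral.integral_add_adjacent_intervals (hint 0 (Real.pi / 2))
    (hint (Real.pi / 2) Real.pi), h_first, h_second]
  norm_num

lemma volume_setOf_snd_mem_div_mem {S B : Set ℝ} (hS : MeasurableSet S) (hB : MeasurableSet B)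
    {f : ℝ → ℝ} (hf : Measurable f) (hf₀ : ∀ θ ∈ S, f θ ≠ 0) :
    volume {p : ℝ × ℝ | p.2 ∈ S ∧ p.1 / f p.2 ∈ B} =
      (∫⁻ θ in S, ENNReal.ofReal |f θ|) * volume B := by
  have hmeas : MeasurableSet {p : ℝ × ℝ | p.2 ∈ S ∧ p.1 / f p.2 ∈ B} :=
    (measurable_snd hS).inter ((measurable_fst.div (hf.comp measurable_snd)) hB)
  have hslice : ∀ θ, volume ((fun r => (r, θ)) ⁻¹' {p : ℝ × ℝ | p.2 ∈ S ∧ p.1 / f p.2 ∈ B}) =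
      S.indicator (fun θ => ENNReal.ofReal |f θ| * volume B) θ := by
    intro θ
    by_cases hθ : θ ∈ S
    · have hslice_eq : (fun r => (r, θ)) ⁻¹' {p : ℝ × ℝ | p.2 ∈ S ∧ p.1 / f p.2 ∈ B} =
          (· * (f θ)⁻¹) ⁻¹' B := by
        ext r
        simp [hθ, div_eq_mul_inv]
      rw [hslice_eq, Real.volume_preimage_mul_right (inv_ne_zero (hf₀ θ hθ)), inv_inv,
        indicator_of_mem hθ]
    · simp [hθ]
  rw [Measure.volume_eq_prod, Measure.prod_apply_symm hmeas]
  simp_rw [hslice]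
  rw [lintegral_indicator hS, lintegral_mul_const _ hf.abs.ennreal_ofReal]

def crossingParams (B : Set ℝ) : Set (ℝ × ℝ) :=
  {p : ℝ × ℝ | p.2 ∈ Ico 0 Real.pi \ {Real.pi / 2} ∧ p.1 / Real.cos p.2 ∈ B}

lemma cos_ne_zero_of_mem_Ico_diff {θ : ℝ} (hθ : θ ∈ Ico 0 Real.pi \ {Real.pi / 2}) :
    Real.cos θ ≠ 0 := by
  obtain ⟨⟨h₀, hπ⟩, hθ⟩ := hθ
  rcases lt_or_gt_of_ne hθ with hlt | hgt
  · exact (Real.cos_pos_of_mem_Ioo ⟨by linarith [Real.pi_pos], hlt⟩).ne'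
  · exact (Real.cos_neg_of_pi_div_two_lt_of_lt hgt (by linarith [Real.pi_pos])).ne

lemma lintegral_ofReal_abs_cos_Ico_diff :
    ∫⁻ θ in Ico 0 Real.pi \ {Real.pi / 2}, ENNReal.ofReal |Real.cos θ| = 2 := by
  rw [Measure.restrict_congr_set (sdiff_null_ae_eq_self (Real.volume_singleton)),
    ← ofReal_integral_eq_lintegral_ofReal
      (Real.continuous_cos.abs.integrableOn_Icc.mono_set Ico_subset_Icc_self)
      (Filter.Eventually.of_forall fun _ => abs_nonneg _),
    integral_Ico_eq_integral_Ioo, ← integral_Ioc_eq_integral_Ioo,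
    ← intervalIntegral.integral_of_le Real.pi_pos.le, integral_abs_cos_zero_pi_s5]
  norm_num

lemma measurableSet_crossingParams {B : Set ℝ} (hB : MeasurableSet B) :
    MeasurableSet (crossingParams B) :=
  (measurable_snd (measurableSet_Ico.diff (measurableSet_singleton _))).inter
    ((measurable_fst.div (Real.measurable_cos.comp measurable_snd)) hB)

lemma volume_crossingParams {B : Set ℝ} (hB : MeasurableSet B) :
    volume (crossingParams B) = 2 * volume B := by
  rw [crossingParams, volume_setOf_snd_mem_div_mem (measurableSet_Ico.diff
    (measurableSet_singleton _)) hB Real.measurable_cos fun _ => cos_ne_zero_of_mem_Ico_diff,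
    lintegral_ofReal_abs_cos_Ico_diff]

lemma crossingParams_subset_strip (B : Set ℝ) : crossingParams B ⊆ strip :=
  fun _ hp => Set.mem_prod.2 ⟨trivial, hp.1.1⟩

lemma Disjoint.crossingParams {B C : Set ℝ} (h : Disjoint B C) :
    Disjoint (crossingParams B) (crossingParams C) :=
  Set.disjoint_left.2 fun _ hB hC => Set.disjoint_left.1 h hB.2 hC.2

lemma xAxisCount_eq_paramCount_crossingParams {Ω : Type*} {R Θ : ℕ → Ω → ℝ}
    (hΘ : ∀ n ω, Θ n ω ∈ Ico 0 Real.pi) (B : Set ℝ) :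
    xAxisCount R Θ B = paramCount R Θ (crossingParams B) := by
  funext ω
  simp only [xAxisCount, paramCount, crossingParams, mem_sdiff, mem_singleton_iff,
    mem_ofPred_eq, hΘ, true_and]

theorem poissonLineProcess_xAxis_poisson_general
    {Ω : Type*} [MeasurableSpace Ω] (P : Measure Ω)
    (lam : ℝ) (R Θ : ℕ → Ω → ℝ)
    (h : IsPoissonLineProcess P lam R Θ) :
    (∀ B : Set ℝ, MeasurableSet B → volume B < ⊤ → ∀ k : ℕ,
        P {ω | xAxisCount R Θ B ω = (k : ℝ≥0∞)} =
          ENNReal.ofReal (poissonProb (2 * lam / Real.pi * (volume B).toReal) k)) ∧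
    (∀ (m : ℕ) (B : Fin m → Set ℝ),
        (∀ i, MeasurableSet (B i)) → (∀ i, volume (B i) < ⊤) →
        Pairwise (Function.onFun Disjoint B) →
        ProbabilityTheory.iIndepFun
          (fun i => xAxisCount R Θ (B i)) P) := by
  obtain ⟨-, -, hΘ, hcount, hindep⟩ := h
  have hfinite {B : Set ℝ} (hB : MeasurableSet B) (hB_fin : volume B < ⊤) :
      volume (crossingParams B) < ⊤ := by
    rw [volume_crossingParams hB]
    exact ENNReal.mul_lt_top ENNReal.ofNat_lt_top hB_fin
  refine ⟨fun B hB hB_fin k => ?_, fun m B hB hB_fin hdisj => ?_⟩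
  · rw [xAxisCount_eq_paramCount_crossingParams hΘ, hcount _ (measurableSet_crossingParams hB)
      (crossingParams_subset_strip B) (hfinite hB hB_fin), volume_crossingParams hB,
      ENNReal.toReal_mul, ENNReal.toReal_ofNat]
    congr 2
    ring
  · simp_rw [xAxisCount_eq_paramCount_crossingParams hΘ]
    exact hindep m (fun i => crossingParams (B i)) (fun i => measurableSet_crossingParams (hB i))
      (fun i => crossingParams_subset_strip _) (fun i => hfinite (hB i) (hB_fin i))
      fun i j hij => (hdisj hij).crossingParams

/-- The intersections of the lines of a Poisson line process of intensity `lam > 0` with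
the `x`-axis form a Poisson point process of intensity `2·lam/π` on `ℝ`: counts on Borel
sets of finite measure are Poisson with mean `(2·lam/π)·Leb(B)`, and counts on pairwise
disjoint Borel sets are mutually independent. -/
theorem poissonLineProcess_xAxis_poisson
    {Ω : Type*} [MeasurableSpace Ω] (P : Measure Ω) [IsProbabilityMeasure P]
    (lam : ℝ) (hlam : 0 < lam) (R Θ : ℕ → Ω → ℝ)
    (h : IsPoissonLineProcess P lam R Θ) :
    (∀ B : Set ℝ, MeasurableSet B → volume B < ⊤ → ∀ k : ℕ,
        P {ω | xAxisCount R Θ B ω = (k : ℝ≥0∞)} =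
          ENNReal.ofReal (poissonProb (2 * lam / Real.pi * (volume B).toReal) k)) ∧
    (∀ (m : ℕ) (B : Fin m → Set ℝ),
        (∀ i, MeasurableSet (B i)) → (∀ i, volume (B i) < ⊤) →
        Pairwise (Function.onFun Disjoint B) →
        ProbabilityTheory.iIndepFun
          (fun i => xAxisCount R Θ (B i)) P) :=
  poissonLineProcess_xAxis_poisson_general P lam R Θ h
end
end

section
/- For every Borel set D ⊆ ℝ² of finite two-dimensional Lebesgue measure, ∫_{θ=0}^{π} ∫_{r ∈ ℝ} μ¹(L_{r,θ} ∩ D) dr dθ = π · Leb₂(D), where μ¹ denotes one-dimensional Hausdorff measure on ℝ² and Leb₂ two-dimensional Lebesgue measure. -/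
open MeasureTheory Set
open scoped ENNReal

noncomputable section

/-- The line `L_{r,θ} = {(x, y) : x·cos θ + y·sin θ = r}` in the Euclidean plane. -/
def lineSet (r θ : ℝ) : Set (EuclideanSpace ℝ (Fin 2)) :=
  {p | p 0 * Real.cos θ + p 1 * Real.sin θ = r}

/-! For a fixed direction `θ`, the map `(r, t) ↦ r • n + t • n⊥`, with `(n, n⊥)` the
orthonormal frame rotated by `θ`, preserves Lebesgue measure, and for each `r` its `t`-slice is an
isometric parametrization of the line `L_{r,θ}`. Hence `μ¹(L_{r,θ} ∩ D)` is the length of a slice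
of the preimage of `D`, and Fubini gives `∫ μ¹(L_{r,θ} ∩ D) dr = Leb₂(D)` for every `θ`;
integrating over `θ ∈ [0, π)` yields the factor `π`. -/

open scoped InnerProductSpace

theorem lintegral_hausdorffMeasure_range_inter {X : Type*} [EMetricSpace X] [MeasurableSpace X]
    [BorelSpace X] {μ : Measure X} {G : ℝ × ℝ → X} (hG : MeasurePreserving G volume μ)
    (hGiso : ∀ r, Isometry fun t => G (r, t)) {D : Set X} (hD : MeasurableSet D) :
    ∫⁻ r, μH[1] (range (fun t => G (r, t)) ∩ D) = μ D :=
  calc ∫⁻ r, μH[1] (range (fun t => G (r, t)) ∩ D)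
      = ∫⁻ r, volume (Prod.mk r ⁻¹' (G ⁻¹' D)) := lintegral_congr fun r => by
        rw [inter_comm, ← (hGiso r).hausdorffMeasure_preimage (Or.inl zero_le_one),
          hausdorffMeasure_real]
        rfl
    _ = volume (G ⁻¹' D) := by
        rw [Measure.volume_eq_prod, Measure.prod_apply (hD.preimage hG.measurable)]
    _ = μ D := hG.measure_preimage hD.nullMeasurableSet

theorem isometry_add_smul_of_norm_eq_one {E : Type*} [SeminormedAddCommGroup E] [NormedSpace ℝ E]
    {v : E} (hv : ‖v‖ = 1) (u : E) : Isometry fun t : ℝ => u + t • v :=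
  Isometry.of_dist_eq fun a b => by
    rw [dist_eq_norm, dist_eq_norm, add_sub_add_left_eq_sub, ← sub_smul, norm_smul, hv, mul_one]

namespace OrthonormalBasis

variable {E : Type*} [NormedAddCommGroup E] [InnerProductSpace ℝ E]
  (b : OrthonormalBasis (Fin 2) ℝ E)

theorem range_smul_add_smul (r : ℝ) :
    range (fun t : ℝ => r • b 0 + t • b 1) = {p | ⟪b 0, p⟫_ℝ = r} := by
  ext p
  constructor
  · rintro ⟨t, rfl⟩
    simp [inner_add_right, inner_smul_right, b.orthonormal.inner_eq_zero]
  · intro hp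
    refine ⟨⟪b 1, p⟫_ℝ, ?_⟩
    rw [← hp]
    simpa [Fin.sum_univ_two] using b.sum_repr' p

theorem measurePreserving_smul_add_smul [FiniteDimensional ℝ E] [MeasurableSpace E]
    [BorelSpace E] :
    MeasurePreserving (fun p : ℝ × ℝ => p.1 • b 0 + p.2 • b 1) volume volume := by
  have h : (fun p : ℝ × ℝ => p.1 • b 0 + p.2 • b 1) =
      b.repr.symm ∘ MeasurableEquiv.toLp 2 (Fin 2 → ℝ) ∘ MeasurableEquiv.finTwoArrow.symm := by
    funext p
    simp [← b.sum_repr_symm, Fin.sum_univ_two]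
  rw [h]
  exact b.measurePreserving_repr_symm.comp
    ((EuclideanSpace.volume_preserving_symm_measurableEquiv_toLp (Fin 2)).symm.comp
      (volume_preserving_finTwoArrow ℝ).symm)

theorem lintegral_hausdorffMeasure_inter_line [FiniteDimensional ℝ E] [MeasurableSpace E]
    [BorelSpace E] {D : Set E} (hD : MeasurableSet D) :
    ∫⁻ r, μH[1] ({p | ⟪b 0, p⟫_ℝ = r} ∩ D) = volume D := by
  simp_rw [← b.range_smul_add_smul]
  exact lintegral_hausdorffMeasure_range_inter b.measurePreserving_smul_add_smul
    (fun r => isometry_add_smul_of_norm_eq_one (b.orthonormal.norm_eq_one 1) (r • b 0)) hD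

end OrthonormalBasis

theorem orthonormal_cos_sin (θ : ℝ) :
    Orthonormal ℝ ![!₂[Real.cos θ, Real.sin θ], !₂[-Real.sin θ, Real.cos θ]] := by
  simp [EuclideanSpace.norm_eq, PiLp.inner_apply, Fin.sum_univ_two]
  ring

def rotatedBasis (θ : ℝ) : OrthonormalBasis (Fin 2) ℝ (EuclideanSpace ℝ (Fin 2)) :=
  OrthonormalBasis.mk (orthonormal_cos_sin θ)
    ((orthonormal_cos_sin θ).linearIndependent.span_eq_top_of_card_eq_finrank' (by simp)).ge

theorem lineSet_eq_setOf_inner (r θ : ℝ) :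
    lineSet r θ = {p | ⟪rotatedBasis θ 0, p⟫_ℝ = r} := by
  ext p
  simp [lineSet, rotatedBasis, PiLp.inner_apply, Fin.sum_univ_two, mul_comm]

theorem crofton_identity_general (D : Set (EuclideanSpace ℝ (Fin 2)))
    (hD : MeasurableSet D) :
    ∫⁻ θ in Set.Ico 0 Real.pi, ∫⁻ r : ℝ,
        MeasureTheory.Measure.hausdorffMeasure (1 : ℝ) (lineSet r θ ∩ D)
      = ENNReal.ofReal Real.pi * volume D := by
  have hline (θ : ℝ) : ∫⁻ r, μH[1] (lineSet r θ ∩ D) = volume D := by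
    simpa only [lineSet_eq_setOf_inner] using
      (rotatedBasis θ).lintegral_hausdorffMeasure_inter_line hD
  rw [setLIntegral_congr_fun measurableSet_Ico fun θ _ => hline θ, setLIntegral_const,
    Real.volume_Ico, sub_zero, mul_comm]

/-- Crofton-type identity: for every Borel set `D ⊆ ℝ²` of finite Lebesgue measure,
`∫₀^π ∫_ℝ μ¹(L_{r,θ} ∩ D) dr dθ = π · Leb₂(D)`, where `μ¹` is one-dimensional
Hausdorff measure on `ℝ²`. -/
theorem crofton_identity (D : Set (EuclideanSpace ℝ (Fin 2)))
    (hD : MeasurableSet D) (hfin : volume D < ⊤) :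
    ∫⁻ θ in Set.Ico 0 Real.pi, ∫⁻ r : ℝ,
        MeasureTheory.Measure.hausdorffMeasure (1 : ℝ) (lineSet r θ ∩ D)
      = ENNReal.ofReal Real.pi * volume D :=
  crofton_identity_general D hD
end
end
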